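/- Let C be a binary linear completely regular code in H(n,2) with minimum distance δ(C) ≥ 2 whose coset graph H(n,2)/Δ(C) is isomorphic to the Shrikhande graph. Then a contradiction arises; i.e., no such code exists. -/

import Mathlib

open SimpleGraph

/-- The Hamming graph on `Fin n → Q`: words adjacent iff they differ in one coordinate. -/
def hammingGraph (n : ℕ) (Q : Type*) [DecidableEq Q] : SimpleGraph (Fin n → Q) where
  Adj x y := hammingDist x y = 1
  symm := ⟨fun x y h => by show hammingDist y x = 1; rw [hammingDist_comm]; exact h⟩
  loopless := ⟨fun x h => by
    have h' : hammingDist x x = 1 := h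
    rw [hammingDist_self] at h'; exact absurd h'.symm one_ne_zero⟩

/-- Distance from a vertex to a code, via graph distance. -/
noncomputable def distToCode {V : Type*} (G : SimpleGraph V) (C : Set V) (x : V) : ℕ :=
  sInf {d | ∃ c ∈ C, G.dist x c = d}

/-- The `i`-th cell of the distance partition of a code. -/
noncomputable def codeCell {V : Type*} (G : SimpleGraph V) (C : Set V) (i : ℕ) : Set V :=
  {x | distToCode G C x = i}

/-- The number of neighbors of `x` lying in `S`. -/
noncomputable def nbrCount {V : Type*} (G : SimpleGraph V) (x : V) (S : Set V) : ℕ :=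
  (G.neighborSet x ∩ S).ncard

/-- Covering radius of a code. -/
noncomputable def covRad {V : Type*} (G : SimpleGraph V) (C : Set V) : ℕ :=
  sSup {d | ∃ x, distToCode G C x = d}

/-- A code is completely regular if its distance partition is equitable. -/
def IsCompRegCode {V : Type*} (G : SimpleGraph V) (C : Set V) : Prop :=
  ∀ i j : ℕ, ∀ x ∈ codeCell G C i, ∀ y ∈ codeCell G C i,
    nbrCount G x (codeCell G C j) = nbrCount G y (codeCell G C j)

/-- Intersection numbers `γ, α, β` of a code with covering radius `ρ`. -/
def HasIntNums {V : Type*} (G : SimpleGraph V) (C : Set V) (ρ : ℕ) (γ α β : ℕ → ℕ) : Prop :=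
  γ 0 = 0 ∧ β ρ = 0 ∧
  ∀ i ≤ ρ, ∀ x ∈ codeCell G C i,
    (1 ≤ i → nbrCount G x (codeCell G C (i-1)) = γ i) ∧
    nbrCount G x (codeCell G C i) = α i ∧
    (i < ρ → nbrCount G x (codeCell G C (i+1)) = β i)

/-- Equitable partition of the vertex set of a graph. -/
def IsEquitable {V : Type*} (G : SimpleGraph V) (Pa : Set (Set V)) : Prop :=
  ∀ P ∈ Pa, ∀ P' ∈ Pa, ∀ x ∈ P, ∀ y ∈ P, nbrCount G x P' = nbrCount G y P'

/-- Quotient graph of a graph by a partition of its vertex set. -/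
def quotientGraph {V : Type*} (G : SimpleGraph V) (Pa : Set (Set V)) : SimpleGraph Pa where
  Adj P P' := P ≠ P' ∧ ∃ x ∈ (P : Set V), ∃ y ∈ (P' : Set V), G.Adj x y
  symm := ⟨by
    rintro P P' ⟨hne, x, hx, y, hy, hxy⟩
    exact ⟨hne.symm, y, hy, x, hx, hxy.symm⟩⟩
  loopless := ⟨by rintro P ⟨hne, -⟩; exact hne rfl⟩

/-- Completely regular partition with common intersection numbers. -/
def IsCompRegPartition {V : Type*} (G : SimpleGraph V) (Pa : Set (Set V))
    (ρ : ℕ) (γ α β : ℕ → ℕ) : Prop :=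
  Setoid.IsPartition Pa ∧ IsEquitable G Pa ∧
    ∀ P ∈ Pa, IsCompRegCode G P ∧ covRad G P = ρ ∧ HasIntNums G P ρ γ α β

/-- Distance-regular graph of diameter `D` with intersection arrays `b`, `c`. -/
def IsDistRegular {V : Type*} (G : SimpleGraph V) (D : ℕ) (b c : ℕ → ℕ) : Prop :=
  G.Connected ∧ (∀ x y : V, G.dist x y ≤ D) ∧ (∃ x y : V, G.dist x y = D) ∧
  ∀ i ≤ D, ∀ x y : V, G.dist x y = i →
    (1 ≤ i → nbrCount G y {z | G.dist x z = i - 1} = c i) ∧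
    (i < D → nbrCount G y {z | G.dist x z = i + 1} = b i)

/-- The tridiagonal quotient matrix of a completely regular code. -/
noncomputable def quotMatrix (ρ : ℕ) (γ α β : ℕ → ℕ) : Matrix (Fin (ρ+1)) (Fin (ρ+1)) ℝ :=
  Matrix.of fun i j =>
    if (j : ℕ) + 1 = (i : ℕ) then (γ (i : ℕ) : ℝ)
    else if (i : ℕ) = (j : ℕ) then (α (i : ℕ) : ℝ)
    else if (i : ℕ) + 1 = (j : ℕ) then (β (i : ℕ) : ℝ)
    else 0


section AuxCoset

variable {n : ℕ} (C : Submodule (ZMod 2) (Fin n → ZMod 2))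

lemma aux_two (z : Fin n → ZMod 2) : z + z = 0 :=
  funext fun i => CharTwo.add_self_eq_zero (z i)

lemma mem_coset {x y : Fin n → ZMod 2} :
    y ∈ (x + ·) '' (C : Set (Fin n → ZMod 2)) ↔ y - x ∈ C := by
  constructor
  · rintro ⟨c, hc, rfl⟩; simpa using hc
  · intro h; exact ⟨y - x, h, add_sub_cancel x y⟩

lemma coset_eq_of_mem {x y : Fin n → ZMod 2}
    (h : y ∈ (x + ·) '' (C : Set (Fin n → ZMod 2))) :
    (x + ·) '' (C : Set (Fin n → ZMod 2)) = (y + ·) '' (C : Set (Fin n → ZMod 2)) := by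
  rw [mem_coset] at h
  ext z
  rw [mem_coset, mem_coset]
  constructor
  · intro hz; have := C.sub_mem hz h; simpa [sub_sub_sub_cancel_left] using this
  · intro hz; have := C.add_mem hz h; simpa [sub_add_sub_cancel] using this

end AuxCoset

/-- no binary linear completely regular code with minimum distance at
least 2 has coset graph isomorphic to the Shrikhande graph (strongly regular
`(16,6,2,2)` and locally a hexagon). -/
theorem no_shrikhande_coset_graph {n : ℕ} (C : Submodule (ZMod 2) (Fin n → ZMod 2))
    (hcr : IsCompRegCode (hammingGraph n (ZMod 2)) (C : Set (Fin n → ZMod 2)))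
    (hδ : ∀ x ∈ C, ∀ y ∈ C, x ≠ y → 2 ≤ hammingDist x y)
    {W : Type*} [Fintype W] [DecidableEq W] (S : SimpleGraph W) [DecidableRel S.Adj]
    (hsrg : S.IsSRGWith 16 6 2 2)
    (hloc : ∀ v : W, Nonempty
      ((SimpleGraph.induce (S.neighborSet v) S) ≃g SimpleGraph.cycleGraph 6))
    (hiso : Nonempty ((quotientGraph (hammingGraph n (ZMod 2))
      {P : Set (Fin n → ZMod 2) | ∃ x : Fin n → ZMod 2,
        P = (x + ·) '' (C : Set (Fin n → ZMod 2))}) ≃g S)) :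
    False := by

  classical
  obtain ⟨f⟩ := hiso
  set G := hammingGraph n (ZMod 2) with hG
  set Pa : Set (Set (Fin n → ZMod 2)) :=
    {P : Set (Fin n → ZMod 2) | ∃ x : Fin n → ZMod 2,
        P = (x + ·) '' (C : Set (Fin n → ZMod 2))} with hPa
  -- weight-one words are not in C
  have hnotinC : ∀ w : Fin n → ZMod 2, hammingNorm w = 1 → w ∉ C := by
    intro w hw hwC
    have hne : w ≠ 0 := by intro h; rw [h] at hw; simp at hw
    have := hδ w hwC 0 C.zero_mem hne
    rw [hammingDist_comm, hammingDist_eq_hammingNorm, neg_zero, zero_add, hw] at this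
    omega
  have hCmem : (C : Set (Fin n → ZMod 2)) ∈ Pa := by
    refine ⟨0, ?_⟩
    ext z; rw [mem_coset]; simp
  set v : ↥Pa := ⟨(C : Set (Fin n → ZMod 2)), hCmem⟩ with hv
  obtain ⟨g⟩ := hloc (f v)
  set P1 : ↥(S.neighborSet (f v)) := g.symm 0 with hP1
  set P2 : ↥(S.neighborSet (f v)) := g.symm 1 with hP2
  have hP12 : S.Adj (P1 : W) (P2 : W) := g.symm.map_adj_iff.mpr (by decide)
  set A : ↥Pa := f.symm (P1 : W) with hA
  set B : ↥Pa := f.symm (P2 : W) with hB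
  have hfA : f A = (P1 : W) := f.apply_symm_apply _
  have hfB : f B = (P2 : W) := f.apply_symm_apply _
  have hvA : (quotientGraph G Pa).Adj v A :=
    f.map_adj_iff.mp (by rw [hfA]; exact P1.2)
  have hvB : (quotientGraph G Pa).Adj v B :=
    f.map_adj_iff.mp (by rw [hfB]; exact P2.2)
  have hAB : (quotientGraph G Pa).Adj A B :=
    f.map_adj_iff.mp (by rw [hfA, hfB]; exact hP12)
  obtain ⟨hvAne, c1, hc1, u1, hu1, hdu1⟩ := hvA
  obtain ⟨hvBne, c2, hc2, u2, hu2, hdu2⟩ := hvB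
  obtain ⟨hABne, x1, hx1, x2, hx2, hdx⟩ := hAB
  obtain ⟨a0, ha0⟩ := A.2
  obtain ⟨b0, hb0⟩ := B.2
  set a : Fin n → ZMod 2 := u1 - c1 with hadef
  set b : Fin n → ZMod 2 := u2 - c2 with hbdef
  have hna : hammingNorm a = 1 := by
    rw [hadef, sub_eq_neg_add, ← hammingDist_eq_hammingNorm]; exact hdu1
  have hnb : hammingNorm b = 1 := by
    rw [hbdef, sub_eq_neg_add, ← hammingDist_eq_hammingNorm]; exact hdu2
  -- A and B are cosets of a, b respectively
  have hAcoset : (A : Set (Fin n → ZMod 2)) = (a + ·) '' (C : Set (Fin n → ZMod 2)) := by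
    have h1 : (A : Set (Fin n → ZMod 2)) = (u1 + ·) '' (C : Set (Fin n → ZMod 2)) := by
      rw [ha0]; exact coset_eq_of_mem C (ha0 ▸ hu1)
    have h2 : ((a + ·) '' (C : Set (Fin n → ZMod 2)))
        = (u1 + ·) '' (C : Set (Fin n → ZMod 2)) :=
      coset_eq_of_mem C (mem_coset C |>.mpr (by rw [hadef, sub_sub_cancel]; exact hc1))
    rw [h1, h2]
  have hBcoset : (B : Set (Fin n → ZMod 2)) = (b + ·) '' (C : Set (Fin n → ZMod 2)) := by
    have h1 : (B : Set (Fin n → ZMod 2)) = (u2 + ·) '' (C : Set (Fin n → ZMod 2)) := by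
      rw [hb0]; exact coset_eq_of_mem C (hb0 ▸ hu2)
    have h2 : ((b + ·) '' (C : Set (Fin n → ZMod 2)))
        = (u2 + ·) '' (C : Set (Fin n → ZMod 2)) :=
      coset_eq_of_mem C (mem_coset C |>.mpr (by rw [hbdef, sub_sub_cancel]; exact hc2))
    rw [h1, h2]
  have m2 : x1 - a ∈ C := by rw [← mem_coset C, ← hAcoset]; exact hx1
  have m1 : x2 - b ∈ C := by rw [← mem_coset C, ← hBcoset]; exact hx2
  set w : Fin n → ZMod 2 := x2 - x1 with hwdef
  have hnw : hammingNorm w = 1 := by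
    rw [hwdef, sub_eq_neg_add, ← hammingDist_eq_hammingNorm]; exact hdx
  set p : Fin n → ZMod 2 := b - a with hpdef
  have hDmem : ((w + ·) '' (C : Set (Fin n → ZMod 2))) ∈ Pa := ⟨w, rfl⟩
  set D : ↥Pa := ⟨(w + ·) '' (C : Set (Fin n → ZMod 2)), hDmem⟩ with hD
  have hwD : w ∈ (D : Set (Fin n → ZMod 2)) := (mem_coset C).mpr (by simp)
  have hpD : p ∈ (D : Set (Fin n → ZMod 2)) := by
    rw [hD]
    refine (mem_coset C).mpr ?_
    have hid : p - w = (x1 - a) - (x2 - b) := by rw [hpdef, hwdef]; ring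
    rw [hid]; exact C.sub_mem m2 m1
  have haA : a ∈ (A : Set (Fin n → ZMod 2)) := by
    rw [hAcoset]; exact (mem_coset C).mpr (by simp)
  have hbB : b ∈ (B : Set (Fin n → ZMod 2)) := by
    rw [hBcoset]; exact (mem_coset C).mpr (by simp)
  -- the three adjacencies of D
  have hvD : (quotientGraph G Pa).Adj v D := by
    refine ⟨?_, 0, C.zero_mem, w, hwD, ?_⟩
    · intro h
      have : w ∈ (C : Set (Fin n → ZMod 2)) := by
        rw [show (C : Set (Fin n → ZMod 2)) = (D : Set (Fin n → ZMod 2)) from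
          congrArg Subtype.val h]
        exact hwD
      exact hnotinC w hnw this
    · show hammingDist (0 : Fin n → ZMod 2) w = 1
      rw [hammingDist_eq_hammingNorm, neg_zero, zero_add]; exact hnw
  have hAD : (quotientGraph G Pa).Adj A D := by
    refine ⟨?_, a, haA, p, hpD, ?_⟩
    · intro h
      have hwA : w ∈ (A : Set (Fin n → ZMod 2)) := by
        rw [show (A : Set (Fin n → ZMod 2)) = (D : Set (Fin n → ZMod 2)) from
          congrArg Subtype.val h]
        exact hwD
      rw [hAcoset, mem_coset] at hwA
      have hbC : b ∈ C := by
        have hid : b = (w - a) - ((x2 - b) - (x1 - a)) + (a + a) := by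
          rw [hwdef]; ring
        rw [hid]
        exact C.add_mem (C.sub_mem hwA (C.sub_mem m1 m2))
          (by rw [aux_two]; exact C.zero_mem)
      exact hnotinC b hnb hbC
    · show hammingDist a p = 1
      have hid : a - p = b := by rw [hpdef]; linear_combination aux_two a - aux_two b
      rw [hammingDist_comm, hammingDist_eq_hammingNorm, neg_add_eq_sub, hid]; exact hnb
  have hBD : (quotientGraph G Pa).Adj B D := by
    refine ⟨?_, b, hbB, p, hpD, ?_⟩
    · intro h
      have hwB : w ∈ (B : Set (Fin n → ZMod 2)) := by
        rw [show (B : Set (Fin n → ZMod 2)) = (D : Set (Fin n → ZMod 2)) from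
          congrArg Subtype.val h]
        exact hwD
      rw [hBcoset, mem_coset] at hwB
      have haC : a ∈ C := by
        have hid : a = (x2 - b) - (x1 - a) - (w - b) := by rw [hwdef]; ring
        rw [hid]
        exact C.sub_mem (C.sub_mem m1 m2) hwB
      exact hnotinC a hna haC
    · show hammingDist b p = 1
      have hid : b - p = a := by rw [hpdef]; ring
      rw [hammingDist_comm, hammingDist_eq_hammingNorm, neg_add_eq_sub, hid]; exact hna
  -- transfer to S and then to the 6-cycle
  have hSvD : S.Adj (f v) (f D) := f.map_adj_iff.mpr hvD
  have hSAD : S.Adj (P1 : W) (f D) := by rw [← hfA]; exact f.map_adj_iff.mpr hAD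
  have hSBD : S.Adj (P2 : W) (f D) := by rw [← hfB]; exact f.map_adj_iff.mpr hBD
  set q3 : ↥(S.neighborSet (f v)) := ⟨f D, hSvD⟩ with hq3
  have hc1' : (cycleGraph 6).Adj 0 (g q3) := by
    have : (cycleGraph 6).Adj (g P1) (g q3) := g.map_adj_iff.mpr hSAD
    rwa [hP1, g.apply_symm_apply] at this
  have hc2' : (cycleGraph 6).Adj 1 (g q3) := by
    have : (cycleGraph 6).Adj (g P2) (g q3) := g.map_adj_iff.mpr hSBD
    rwa [hP2, g.apply_symm_apply] at this
  have : ∀ c : Fin 6, (cycleGraph 6).Adj 0 c → (cycleGraph 6).Adj 1 c → False := by decide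
  exact this (g q3) hc1' hc2'
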